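/- (Gradient lower bound propagation, step in Lemma 3.4.) Let u be Lipschitz on B̄₁(0) with Lipschitz constant C and a viscosity subsolution of Δ_∞u = 0, and suppose S⁺u(0) = δ > 0, where S⁺u(z) = lim_{s→0⁺}(max_{∂B_s(z)}u - u(z))/s. Let ε > 0 be small, x_ε ∈ B_{1/2}(0), and let h_ε ∈ ∂B_{ε^{3/4}}(0) satisfy u(x_ε + h_ε) = max_{|h| = ε^{3/4}} u(x_ε + h); assume additionally that u(x_ε + h_ε) - u(y_ε) ≥ max_{|h| ≤ ε^{3/4}}(u(h) - u(0)) + |y_ε|⁴ + |x_ε - y_ε|²/(2ε) for some y_ε with |x_ε - y_ε| ≤ Cε. Then S⁺u(x_ε + h_ε) ≥ δ - C²ε^{1/4}. -/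

import Mathlib

open scoped RealInnerProductSpace
open Metric

variable {n : ℕ}

/-- The infinity Laplacian `Δ_∞ φ (x) = Dφ(x) · D²φ(x) · Dφ(x)`. -/
noncomputable def infLap (φ : EuclideanSpace ℝ (Fin n) → ℝ) (x : EuclideanSpace ℝ (Fin n)) : ℝ :=
  ⟪fderiv ℝ (gradient φ) x (gradient φ x), gradient φ x⟫

/-- Viscosity subsolution of `Δ_∞ u = 0` in `Ω`. -/
def InfSubsol0 (Ω : Set (EuclideanSpace ℝ (Fin n))) (u : EuclideanSpace ℝ (Fin n) → ℝ) : Prop :=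
  ∀ x₀ ∈ Ω, ∀ φ : EuclideanSpace ℝ (Fin n) → ℝ, ContDiff ℝ 2 φ →
    IsLocalMax (fun x => u x - φ x) x₀ → infLap φ x₀ ≥ 0

/-- `S⁺u(z) = lim_{s→0⁺} (max_{∂B_s(z)} u - u(z))/s`, realized (by monotonicity) as an
infimum over admissible radii. -/
noncomputable def Splus (Ω : Set (EuclideanSpace ℝ (Fin n)))
    (u : EuclideanSpace ℝ (Fin n) → ℝ) (z : EuclideanSpace ℝ (Fin n)) : ℝ :=
  sInf {q : ℝ | ∃ s : ℝ, 0 < s ∧ closedBall z s ⊆ Ω ∧ q = (sSup (u '' sphere z s) - u z) / s}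

/-!
A subsolution of `Δ∞ u = 0` lies below cones: testing `u` against a `C²` regularization of a cone,
a strict supersolution away from its vertex, gives `u z ≤ u c + S⁺_R u(c) ‖z - c‖` on `B̄_R(c)`.
Hence `s ↦ S⁺_s u(z)` is nondecreasing, and at a maximum point `y` of `u` on `∂B_r(x)` the slope
is at least `S⁺_r u(x)`: on the segment from `y` towards `x` the cone bound makes `u` drop at rate
`S⁺_r u(x)`, and the Lipschitz bound moves the spheres centred there back to `y`.
With `r = ε^{3/4}`, the penalization inequality, the Lipschitz bound at `y_ε` and
`C d - d² / (2ε) ≤ C² ε / 2` give `S⁺_r u(x_ε) ≥ δ - C² ε / r = δ - C² ε^{1/4}`.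
-/

open Topology Filter NNReal

local notation "E" => EuclideanSpace ℝ (Fin n)

section Radial

variable {f f' f'' : ℝ → ℝ}

lemma hasFDerivAt_norm_sub_sq (c x : E) :
    HasFDerivAt (fun z : E => ‖z - c‖ ^ 2) (2 • innerSL ℝ (x - c)) x := by
  simpa using ((hasFDerivAt_id x).sub_const c).norm_sq

lemma hasGradientAt_comp_norm_sub_sq (hf : ∀ t, 0 ≤ t → HasDerivAt f (f' t) t) (c x : E) :
    HasGradientAt (fun z : E => f (‖z - c‖ ^ 2)) ((2 * f' (‖x - c‖ ^ 2)) • (x - c)) x := by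
  rw [hasGradientAt_iff_hasFDerivAt]
  refine ((hf _ (sq_nonneg _)).comp_hasFDerivAt x (hasFDerivAt_norm_sub_sq c x)).congr_fderiv ?_
  ext y
  simp only [map_sub, two_smul, smul_add, add_apply, smul_apply, sub_apply, innerSL_apply_apply,
    smul_eq_mul, map_smul, InnerProductSpace.toDual_apply_apply]
  ring

lemma infLap_comp_norm_sub_sq (hf : ∀ t, 0 ≤ t → HasDerivAt f (f' t) t)
    (hf' : ∀ t, 0 ≤ t → HasDerivAt f' (f'' t) t) (c x : E) :
    infLap (fun z : E => f (‖z - c‖ ^ 2)) x =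
      8 * f' (‖x - c‖ ^ 2) ^ 2 * ‖x - c‖ ^ 2 *
        (f' (‖x - c‖ ^ 2) + 2 * f'' (‖x - c‖ ^ 2) * ‖x - c‖ ^ 2) := by
  have hgrad : gradient (fun z : E => f (‖z - c‖ ^ 2)) =
      fun z => (2 * f' (‖z - c‖ ^ 2)) • (z - c) :=
    funext fun z => (hasGradientAt_comp_norm_sub_sq hf c z).gradient
  have hD := (((hf' _ (sq_nonneg _)).comp_hasFDerivAt x (hasFDerivAt_norm_sub_sq c x)).const_mul
    2).smul ((hasFDerivAt_id x).sub_const c)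
  rw [infLap, hgrad, show fderiv ℝ (fun z : E => (2 * f' (‖z - c‖ ^ 2)) • (z - c)) x = _ from
    hD.fderiv]
  simp only [add_apply, smul_apply,
    ContinuousLinearMap.smulRight_apply, ContinuousLinearMap.id_apply, innerSL_apply_apply,
    smul_eq_mul, nsmul_eq_mul, Nat.cast_ofNat, inner_add_left, real_inner_smul_left,
    real_inner_smul_right, real_inner_self_eq_norm_sq, Function.comp_apply, id]
  ring

end Radial

section ConeTest

variable {a γ η : ℝ}

/-- A `C²` regularization of the cone `a ‖z - c‖`, bent down by a small paraboloid so that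
`Δ∞ < 0` away from the vertex. -/
noncomputable def coneTest (a γ η : ℝ) (c z : E) : ℝ :=
  a * √(‖z - c‖ ^ 2 + η) - γ * ‖z - c‖ ^ 2

lemma hasDerivAt_coneProfile (hη : 0 < η) (t : ℝ) (ht : 0 ≤ t) :
    HasDerivAt (fun t => a * √(t + η) - γ * t) (a / (2 * √(t + η)) - γ) t := by
  have h := ((((hasDerivAt_id' t).add_const η).sqrt (by linarith)).const_mul a).sub
    ((hasDerivAt_id' t).const_mul γ)
  exact h.congr_deriv (by field_simp)

lemma hasDerivAt_coneProfile_deriv (hη : 0 < η) (t : ℝ) (ht : 0 ≤ t) :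
    HasDerivAt (fun t => a / (2 * √(t + η)) - γ) (-(a / (4 * ((t + η) * √(t + η))))) t := by
  have hs : 0 < t + η := by linarith
  have h := ((hasDerivAt_const t a).div
    ((((hasDerivAt_id' t).add_const η).sqrt hs.ne').const_mul 2) (by positivity)).sub_const γ
  refine h.congr_deriv ?_
  have hsq := Real.mul_self_sqrt hs.le
  field_simp
  linear_combination (4 * a) * hsq

lemma contDiff_coneTest (hη : 0 < η) (c : E) : ContDiff ℝ 2 (coneTest a γ η c) := by
  have hn : ContDiff ℝ 2 fun z : E => ‖z - c‖ ^ 2 := (contDiff_id.sub contDiff_const).norm_sq ℝ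
  exact contDiff_iff_contDiffAt.2 fun x => ((ContDiffAt.sqrt (hn.add contDiff_const).contDiffAt
    (by positivity)).const_smul a).sub (hn.contDiffAt.const_smul γ)

lemma infLap_coneTest_neg {ρ R : ℝ} (hγ : 0 < γ) (hη : 0 < η) (hρ : 0 < ρ)
    (hslope : 2 * γ * √(R ^ 2 + η) < a) (hvertex : a * η < 2 * γ * ρ ^ 3) {c x : E}
    (hρx : ρ ≤ ‖x - c‖) (hxR : ‖x - c‖ ≤ R) : infLap (coneTest a γ η c) x < 0 := by
  rw [show coneTest a γ η c = fun z => (fun t => a * √(t + η) - γ * t) (‖z - c‖ ^ 2) from rfl,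
    infLap_comp_norm_sub_sq (hasDerivAt_coneProfile hη) (hasDerivAt_coneProfile_deriv hη)]
  set t := ‖x - c‖ ^ 2
  have ht : ρ ^ 2 ≤ t := pow_le_pow_left₀ hρ.le hρx 2
  have hs : 0 < t + η := by positivity
  set q := √(t + η)
  have hq : 0 < q := Real.sqrt_pos.2 hs
  have hqq : q ^ 2 = t + η := Real.sq_sqrt hs.le
  have hρq : ρ ≤ q := Real.le_sqrt_of_sq_le (by linarith)
  have hqR : q ≤ √(R ^ 2 + η) :=
    Real.sqrt_le_sqrt (by gcongr; exact pow_le_pow_left₀ (norm_nonneg _) hxR 2)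
  have hpos : 0 < a / (2 * q) - γ := by
    rw [sub_pos, lt_div_iff₀ (by positivity)]
    nlinarith
  have hneg : a / (2 * q) - γ + 2 * -(a / (4 * ((t + η) * q))) * t < 0 := by
    have hρ3 : ρ ^ 3 ≤ (t + η) * q := by
      calc ρ ^ 3 = ρ ^ 2 * ρ := by ring
        _ ≤ (t + η) * q := by gcongr; linarith
    have : a / (2 * q) - γ + 2 * -(a / (4 * ((t + η) * q))) * t =
        a * η / (2 * ((t + η) * q)) - γ := by
      field_simp
      ring
    rw [this, sub_neg, div_lt_iff₀ (by positivity)]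
    nlinarith
  have ht0 : 0 < t := (by positivity : 0 < ρ ^ 2).trans_le ht
  exact mul_neg_of_pos_of_neg (by positivity) hneg

end ConeTest

/-- `S⁺_s u(z)`; `Splus Ω u z` is the infimum of these over the radii `s` admissible in `Ω`. -/
noncomputable def sphereSlope (u : E → ℝ) (z : E) (s : ℝ) : ℝ :=
  (sSup (u '' sphere z s) - u z) / s

lemma le_Splus {Ω : Set E} {u : E → ℝ} {z : E} {b : ℝ} (hne : ∃ s > 0, closedBall z s ⊆ Ω)
    (h : ∀ s > 0, closedBall z s ⊆ Ω → b ≤ sphereSlope u z s) : b ≤ Splus Ω u z := by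
  obtain ⟨s, hs, hsΩ⟩ := hne
  exact le_csInf ⟨_, s, hs, hsΩ, rfl⟩ fun q ⟨s, hs, hsΩ, hq⟩ => hq ▸ h s hs hsΩ

lemma sphereSlope_le_of_lipschitzOnWith [Nontrivial E] {u : E → ℝ} {K : ℝ≥0} {z : E} {s : ℝ}
    (hu : LipschitzOnWith K u (closedBall z s)) (hs : 0 < s) : sphereSlope u z s ≤ K := by
  rw [sphereSlope, div_le_iff₀ hs, sub_le_iff_le_add']
  refine csSup_le ((NormedSpace.sphere_nonempty.2 hs.le).image u) ?_
  rintro _ ⟨w, hw, rfl⟩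
  simpa [mem_sphere.1 hw] using
    hu.le_add_mul (sphere_subset_closedBall hw) (mem_closedBall_self hs.le)

lemma sSup_image_sphere_le_add {F : Type*} [NormedAddCommGroup F] [NormedSpace ℝ F]
    [ProperSpace F] [Nontrivial F] {u : F → ℝ} {K : ℝ≥0} {S : Set F} (hu : LipschitzOnWith K u S)
    {p y : F} {t : ℝ} (ht : 0 ≤ t) (hp : sphere p t ⊆ S) (hy : sphere y t ⊆ S) :
    sSup (u '' sphere p t) ≤ sSup (u '' sphere y t) + K * dist p y := by
  have hbdd : BddAbove (u '' sphere y t) :=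
    ((isCompact_sphere y t).image_of_continuousOn (hu.continuousOn.mono hy)).bddAbove
  refine csSup_le ((NormedSpace.sphere_nonempty.2 ht).image u) ?_
  rintro _ ⟨w, hw, rfl⟩
  have hw' : w + (y - p) ∈ sphere y t := by
    rw [mem_sphere_iff_norm, show w + (y - p) - y = w - p by abel]
    exact mem_sphere_iff_norm.1 hw
  have h := hu.le_add_mul (hp hw) (hy hw')
  rw [dist_eq_norm, show w - (w + (y - p)) = p - y by abel, ← dist_eq_norm] at h
  linarith [le_csSup hbdd ⟨_, hw', rfl⟩]

lemma sSup_image_sphere_sub_le [Nontrivial E] {u : E → ℝ} {z : E} {r : ℝ}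
    (hu : ContinuousOn u (closedBall z r)) (hr : 0 ≤ r) :
    sSup (u '' sphere z r) - u z ≤ sSup ((fun w => u w - u z) '' closedBall z r) := by
  have hbdd : BddAbove ((fun w => u w - u z) '' closedBall z r) :=
    ((isCompact_closedBall z r).image_of_continuousOn (hu.sub continuousOn_const)).bddAbove
  rw [sub_le_iff_le_add]
  refine csSup_le ((NormedSpace.sphere_nonempty.2 hr).image u) ?_
  rintro _ ⟨w, hw, rfl⟩
  linarith [le_csSup hbdd ⟨w, sphere_subset_closedBall hw, rfl⟩]

namespace InfSubsol0

variable {Ω : Set (EuclideanSpace ℝ (Fin n))} {u : EuclideanSpace ℝ (Fin n) → ℝ}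
  {c : EuclideanSpace ℝ (Fin n)} {R : ℝ}

lemma infLap_nonneg_of_isMaxOn (hsub : InfSubsol0 Ω u) (hΩ : closedBall c R ⊆ Ω) {φ : E → ℝ}
    (hφ : ContDiff ℝ 2 φ) {x₀ : E} (hmax : IsMaxOn (fun x => u x - φ x) (closedBall c R) x₀)
    (hx₀ : x₀ ∈ ball c R) : 0 ≤ infLap φ x₀ :=
  hsub x₀ (hΩ (ball_subset_closedBall hx₀)) φ hφ
    (hmax.isLocalMax (closedBall_mem_nhds_of_mem hx₀))

lemma le_sSup_sphere [Nontrivial E] (hsub : InfSubsol0 Ω u) (hu : ContinuousOn u (closedBall c R))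
    (hΩ : closedBall c R ⊆ Ω) (hR : 0 ≤ R) : u c ≤ sSup (u '' sphere c R) := by
  have hbdd : BddAbove (u '' sphere c R) :=
    ((isCompact_sphere c R).image_of_continuousOn (hu.mono sphere_subset_closedBall)).bddAbove
  obtain ⟨w, hw⟩ := exists_norm_eq E (by positivity : 0 ≤ 2 * R)
  refine le_of_forall_pos_le_add fun θ hθ => ?_
  -- test against the concave paraboloid `-γ ‖z - v‖²`, whose vertex `v` lies outside the ball
  set γ := θ / (9 * R ^ 2 + 1)
  set v := c + w
  set φ : E → ℝ := fun z => (fun t => -γ * t) (‖z - v‖ ^ 2)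
  have hφ : ContDiff ℝ 2 φ := contDiff_const.mul ((contDiff_id.sub contDiff_const).norm_sq ℝ)
  obtain ⟨x₀, hx₀, hmax⟩ := (isCompact_closedBall c R).exists_isMaxOn
    ⟨c, mem_closedBall_self hR⟩ (hu.sub hφ.continuous.continuousOn)
  have hx₀c : ‖x₀ - c‖ ≤ R := mem_closedBall_iff_norm.1 hx₀
  have hx₀v : ‖x₀ - v‖ = ‖w - (x₀ - c)‖ := by
    rw [norm_sub_rev]; congr 1; simp only [v]; abel
  have hγ : 0 < γ := by positivity
  rcases hx₀c.eq_or_lt with hsphere | hinterior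
  · have hux₀ : u x₀ ≤ sSup (u '' sphere c R) :=
      le_csSup hbdd ⟨x₀, mem_sphere_iff_norm.2 hsphere, rfl⟩
    have hfar : γ * ‖x₀ - v‖ ^ 2 ≤ γ * (3 * R) ^ 2 := by
      gcongr
      rw [hx₀v]; linarith [norm_sub_le w (x₀ - c)]
    have hγθ : γ * (3 * R) ^ 2 ≤ θ := by
      rw [div_mul_eq_mul_div, div_le_iff₀ (by positivity)]; nlinarith
    have hmaxc : u c - φ c ≤ u x₀ - φ x₀ := hmax (mem_closedBall_self hR)
    have hφc : φ c ≤ 0 := by simp only [φ]; nlinarith [sq_nonneg ‖c - v‖]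
    simp only [φ] at hmaxc hφc
    linarith
  · have hpos : 0 < ‖x₀ - v‖ ^ 2 := by
      rw [hx₀v]; nlinarith [norm_sub_norm_le w (x₀ - c)]
    have hneg : infLap φ x₀ < 0 := by
      rw [infLap_comp_norm_sub_sq (f' := fun _ => -γ) (f'' := fun _ => 0)
        (fun t _ => ((hasDerivAt_id' t).const_mul (-γ)).congr_deriv (mul_one _))
        (fun t _ => hasDerivAt_const t (-γ))]
      simp only [mul_zero, zero_mul, add_zero, neg_sq]
      exact mul_neg_of_pos_of_neg (by positivity) (neg_neg_of_pos hγ)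
    exact absurd (hsub.infLap_nonneg_of_isMaxOn hΩ hφ hmax (mem_ball_iff_norm.2 hinterior))
      hneg.not_ge

lemma le_cone (hsub : InfSubsol0 Ω u) (hu : ContinuousOn u (closedBall c R))
    (hΩ : closedBall c R ⊆ Ω) {a : ℝ} (ha : 0 < a) (hM : sSup (u '' sphere c R) ≤ u c + a * R)
    {z : E} (hz : z ∈ closedBall c R) : u z ≤ u c + a * ‖z - c‖ := by
  have hR : 0 ≤ R := nonempty_closedBall.1 ⟨z, hz⟩
  have hbdd : BddAbove (u '' sphere c R) :=
    ((isCompact_sphere c R).image_of_continuousOn (hu.mono sphere_subset_closedBall)).bddAbove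
  refine le_of_forall_pos_le_add fun θ hθ => ?_
  obtain ⟨ρ, hρ, hnear⟩ : ∃ ρ > 0, ∀ x ∈ closedBall c R, ‖x - c‖ < ρ → u x < u c + θ / 3 := by
    obtain ⟨ρ, hρ, h⟩ := continuousWithinAt_iff.1 (hu c (mem_closedBall_self hR)) (θ / 3)
      (by positivity)
    refine ⟨ρ, hρ, fun x hx hxc => ?_⟩
    have := (abs_lt.1 (h hx (by rwa [dist_eq_norm]))).2
    linarith
  obtain ⟨γ, hγ, hγR, hslope⟩ : ∃ γ > 0, γ * R ^ 2 < θ / 3 ∧ 2 * γ * √(R ^ 2 + 1) < a := by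
    refine Eventually.exists_gt (Eventually.and ?_ ?_)
    · exact ((continuous_id.mul continuous_const).tendsto' 0 0 (by simp)).eventually_lt_const
        (by positivity)
    · exact ((by fun_prop : Continuous fun γ : ℝ => 2 * γ * √(R ^ 2 + 1)).tendsto' 0 0
        (by simp)).eventually_lt_const ha
  obtain ⟨η, hη, hη1, hηθ, hvertex⟩ :
      ∃ η > 0, η < 1 ∧ a * √η < θ / 3 ∧ a * η < 2 * γ * ρ ^ 3 := by
    refine Eventually.exists_gt ((eventually_lt_nhds one_pos).and (Eventually.and ?_ ?_))
    · exact ((by fun_prop : Continuous fun η : ℝ => a * √η).tendsto' 0 0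
        (by simp)).eventually_lt_const (by positivity)
    · exact ((continuous_const.mul continuous_id).tendsto' 0 0 (by simp)).eventually_lt_const
        (by positivity)
  have hφ := contDiff_coneTest (a := a) (γ := γ) hη c
  obtain ⟨x₀, hx₀, hmax⟩ := (isCompact_closedBall c R).exists_isMaxOn
    ⟨c, mem_closedBall_self hR⟩ (hu.sub hφ.continuous.continuousOn)
  have hx₀c : ‖x₀ - c‖ ≤ R := mem_closedBall_iff_norm.1 hx₀
  have hγx₀ : γ * ‖x₀ - c‖ ^ 2 ≤ θ / 3 := by
    have : γ * ‖x₀ - c‖ ^ 2 ≤ γ * R ^ 2 := by gcongr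
    linarith
  have hmax_le : u x₀ - coneTest a γ η c x₀ ≤ u c + 2 * θ / 3 := by
    rcases lt_or_ge ‖x₀ - c‖ ρ with hx₀ρ | hρx₀
    · have := hnear x₀ hx₀ hx₀ρ
      have : 0 ≤ a * √(‖x₀ - c‖ ^ 2 + η) := by positivity
      simp only [coneTest]
      linarith
    rcases hx₀c.eq_or_lt with hsphere | hinterior
    · have hux₀ : u x₀ ≤ sSup (u '' sphere c R) :=
        le_csSup hbdd ⟨x₀, mem_sphere_iff_norm.2 hsphere, rfl⟩
      have : a * R ≤ a * √(‖x₀ - c‖ ^ 2 + η) := by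
        gcongr
        exact Real.le_sqrt_of_sq_le (by rw [hsphere]; linarith)
      simp only [coneTest]
      linarith
    · have hneg := infLap_coneTest_neg hγ hη hρ
        (lt_of_le_of_lt (by gcongr) hslope) hvertex hρx₀ hx₀c
      exact absurd (hsub.infLap_nonneg_of_isMaxOn hΩ hφ hmax (mem_ball_iff_norm.2 hinterior))
        hneg.not_ge
  have hz_le : coneTest a γ η c z ≤ a * ‖z - c‖ + θ / 3 := by
    have : √(‖z - c‖ ^ 2 + η) ≤ ‖z - c‖ + √η := Real.sqrt_le_iff.2 ⟨by positivity, by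
      nlinarith [Real.sq_sqrt hη.le, Real.sqrt_nonneg η, norm_nonneg (z - c)]⟩
    have : 0 ≤ γ * ‖z - c‖ ^ 2 := by positivity
    simp only [coneTest]
    nlinarith
  have : u z - coneTest a γ η c z ≤ u x₀ - coneTest a γ η c x₀ := hmax hz
  linarith

lemma sphereSlope_nonneg [Nontrivial E] (hsub : InfSubsol0 Ω u)
    (hu : ContinuousOn u (closedBall c R)) (hΩ : closedBall c R ⊆ Ω) (hR : 0 < R) :
    0 ≤ sphereSlope u c R :=
  div_nonneg (sub_nonneg.2 (hsub.le_sSup_sphere hu hΩ hR.le)) hR.le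

lemma Splus_le_sphereSlope [Nontrivial E] (hsub : InfSubsol0 Ω u) (hu : ContinuousOn u Ω)
    (hΩ : closedBall c R ⊆ Ω) (hR : 0 < R) : Splus Ω u c ≤ sphereSlope u c R :=
  csInf_le ⟨0, fun _ ⟨_, hs, hsΩ, hq⟩ => hq ▸ hsub.sphereSlope_nonneg (hu.mono hsΩ) hsΩ hs⟩
    ⟨R, hR, hΩ, rfl⟩

lemma le_add_sphereSlope_mul [Nontrivial E] (hsub : InfSubsol0 Ω u)
    (hu : ContinuousOn u (closedBall c R)) (hΩ : closedBall c R ⊆ Ω) (hR : 0 < R) {z : E}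
    (hz : z ∈ closedBall c R) : u z ≤ u c + sphereSlope u c R * ‖z - c‖ := by
  have hQ := hsub.sphereSlope_nonneg hu hΩ hR
  have hzc : ‖z - c‖ ≤ R := mem_closedBall_iff_norm.1 hz
  refine le_of_forall_pos_le_add fun θ hθ => ?_
  have hM : sSup (u '' sphere c R) ≤ u c + (sphereSlope u c R + θ / R) * R := by
    rw [add_mul, div_mul_cancel₀ θ hR.ne', sphereSlope, div_mul_cancel₀ _ hR.ne']
    linarith
  have hcone := hsub.le_cone hu hΩ (by positivity) hM hz
  have : θ / R * ‖z - c‖ ≤ θ := by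
    rw [div_mul_eq_mul_div, div_le_iff₀ hR]; gcongr
  linarith

lemma sphereSlope_mono [Nontrivial E] (hsub : InfSubsol0 Ω u)
    (hu : ContinuousOn u (closedBall c R)) (hΩ : closedBall c R ⊆ Ω) {t : ℝ} (ht : 0 < t)
    (htR : t ≤ R) : sphereSlope u c t ≤ sphereSlope u c R := by
  rw [sphereSlope, div_le_iff₀ ht, sub_le_iff_le_add']
  refine csSup_le ((NormedSpace.sphere_nonempty.2 ht.le).image u) ?_
  rintro _ ⟨w, hw, rfl⟩
  have hwc : ‖w - c‖ = t := mem_sphere_iff_norm.1 hw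
  simpa [hwc] using hsub.le_add_sphereSlope_mul hu hΩ (ht.trans_le htR)
    (mem_closedBall_iff_norm.2 (hwc.trans_le htR))

lemma sphereSlope_le_of_eq_sSup [Nontrivial E] (hsub : InfSubsol0 Ω u) {x y : E} {r s : ℝ}
    {K : ℝ≥0} (hu : ContinuousOn u (closedBall x r)) (hΩx : closedBall x r ⊆ Ω) (hr : 0 < r)
    (hy : ‖y - x‖ = r) (hmax : u y = sSup (u '' sphere x r))
    (hLip : LipschitzOnWith K u (closedBall y s)) (hΩy : closedBall y s ⊆ Ω) (hs : 0 < s) :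
    sphereSlope u x r ≤ sphereSlope u y s := by
  have hbr : u y = u x + sphereSlope u x r * r := by
    rw [hmax, sphereSlope, div_mul_cancel₀ _ hr.ne']; ring
  set b := sphereSlope u x r
  obtain ⟨t, ht, hts⟩ : ∃ t > 0, 2 * t ≤ s := ⟨s / 2, by positivity, by linarith⟩
  suffices b * t ≤ sSup (u '' sphere y t) - u y from
    ((le_div_iff₀ ht).2 this).trans (hsub.sphereSlope_mono hLip.continuousOn hΩy ht (by linarith))
  refine le_of_forall_pos_le_add fun θ hθ => ?_
  obtain ⟨σ, hσ, hσr, hσt, hσθ⟩ : ∃ σ > 0, σ < r ∧ σ < t ∧ 2 * K * σ < θ :=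
    Eventually.exists_gt ((eventually_lt_nhds hr).and ((eventually_lt_nhds ht).and
      (((continuous_const.mul continuous_id).tendsto' 0 0 (by simp)).eventually_lt_const hθ)))
  set p := AffineMap.lineMap y x (σ / r)
  have hpy : dist p y = σ := by
    rw [dist_lineMap_left, dist_eq_norm, hy, Real.norm_of_nonneg (by positivity),
      div_mul_cancel₀ _ hr.ne']
  have hpx : ‖p - x‖ = r - σ := by
    rw [← dist_eq_norm, dist_lineMap_right, dist_eq_norm, hy,
      Real.norm_of_nonneg (by rw [sub_nonneg, div_le_one hr]; exact hσr.le)]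
    field_simp
  have hpS : closedBall p t ⊆ closedBall y s :=
    closedBall_subset_closedBall' (by rw [hpy]; linarith)
  have hup : u p ≤ u y - b * σ := by
    have := hsub.le_add_sphereSlope_mul hu hΩx hr (mem_closedBall_iff_norm.2 (by linarith))
    rw [hpx] at this
    linarith
  have hslope_p : b ≤ sphereSlope u p t := by
    have hσS : sphere p σ ⊆ closedBall y s :=
      sphere_subset_closedBall.trans ((closedBall_subset_closedBall hσt.le).trans hpS)
    have hbdd : BddAbove (u '' sphere p σ) :=
      ((isCompact_sphere p σ).image_of_continuousOn (hLip.continuousOn.mono hσS)).bddAbove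
    have hyp : u y ≤ sSup (u '' sphere p σ) :=
      le_csSup hbdd ⟨y, by rw [mem_sphere, dist_comm, hpy], rfl⟩
    calc b ≤ sphereSlope u p σ := (le_div_iff₀ hσ).2 (by linarith)
      _ ≤ sphereSlope u p t :=
        hsub.sphereSlope_mono (hLip.continuousOn.mono hpS) (hpS.trans hΩy) hσ hσt.le
  have hspheres := sSup_image_sphere_le_add hLip ht.le (sphere_subset_closedBall.trans hpS)
    (sphere_subset_closedBall.trans (closedBall_subset_closedBall (by linarith)))
  have hlip_yp : u y - u p ≤ K * σ := by
    have := hLip.le_add_mul (mem_closedBall_self hs.le) (hpS (mem_closedBall_self ht.le))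
    rw [dist_comm, hpy] at this
    linarith
  have := (le_div_iff₀ ht).1 hslope_p
  rw [hpy] at hspheres
  linarith

lemma sub_le_sphereSlope_of_penalized [Nontrivial E] {C δ ε r : ℝ} {x y xr : E}
    (hsub : InfSubsol0 (ball 0 1) u)
    (hLip : LipschitzOnWith C.toNNReal u (closedBall 0 1))
    (hδ : δ ≤ sphereSlope u 0 r) (hε : 0 < ε) (hr : 0 < r) (hr1 : r < 1 / 2) (hx : ‖x‖ < 1 / 2)
    (hmax : u xr = sSup (u '' sphere x r)) (hxy : ‖x - y‖ ≤ C * ε)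
    (hpen : sSup ((fun h => u h - u 0) '' closedBall 0 r) + ‖y‖ ^ 4 + ‖x - y‖ ^ 2 / (2 * ε) ≤
      u xr - u y) :
    δ - C ^ 2 * ε / r ≤ sphereSlope u x r := by
  have hC : 0 ≤ C := nonneg_of_mul_nonneg_left ((norm_nonneg _).trans hxy) hε
  have hK : (C.toNNReal : ℝ) = C := Real.coe_toNNReal C hC
  have hΩ0 : closedBall (0 : E) r ⊆ closedBall 0 1 := closedBall_subset_closedBall (by linarith)
  by_cases hy : y ∈ closedBall 0 1
  · have hlip : u x ≤ u y + C * ‖x - y‖ := by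
      simpa [hK, dist_eq_norm] using
        hLip.le_add_mul (mem_closedBall_zero_iff.2 (by linarith)) hy
    have hyoung : C * ‖x - y‖ - C ^ 2 * ε / 2 ≤ ‖x - y‖ ^ 2 / (2 * ε) := by
      rw [le_div_iff₀ (by positivity)]
      nlinarith [sq_nonneg (‖x - y‖ - C * ε)]
    have hsup := sSup_image_sphere_sub_le (hLip.continuousOn.mono hΩ0) hr.le
    rw [sphereSlope, le_div_iff₀ hr] at hδ
    rw [sphereSlope, ← hmax, le_div_iff₀ hr, sub_mul, div_mul_cancel₀ _ hr.ne']
    nlinarith [mul_nonneg (sq_nonneg C) hε.le, pow_nonneg (norm_nonneg y) 4]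
  · have hCε : 1 / 2 < C * ε := by
      have : 1 < ‖y‖ := by simpa using hy
      linarith [norm_sub_norm_le y x, norm_sub_rev y x]
    have hδC : δ ≤ C := hδ.trans <| by
      simpa [hK] using sphereSlope_le_of_lipschitzOnWith (hLip.mono hΩ0) hr
    have hCr : C ≤ C ^ 2 * ε / r := by
      rw [le_div_iff₀ hr]; nlinarith
    have hΩx : closedBall x r ⊆ ball 0 1 :=
      closedBall_subset_ball' (by rw [dist_zero_right]; linarith)
    calc δ - C ^ 2 * ε / r ≤ 0 := by linarith
      _ ≤ sphereSlope u x r :=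
        hsub.sphereSlope_nonneg (hLip.continuousOn.mono (hΩx.trans ball_subset_closedBall)) hΩx hr

end InfSubsol0

theorem stmt18_general (u : EuclideanSpace ℝ (Fin n) → ℝ) (C : ℝ)
    (hLip : LipschitzOnWith C.toNNReal u (closedBall (0 : EuclideanSpace ℝ (Fin n)) 1))
    (hsub : InfSubsol0 (ball (0 : EuclideanSpace ℝ (Fin n)) 1) u)
    (δ : ℝ)
    (hδ : Splus (ball (0 : EuclideanSpace ℝ (Fin n)) 1) u 0 = δ)
    (ε : ℝ) (hε : 0 < ε) (hεsmall : ε ^ ((3:ℝ)/4) < 1/2)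
    (xe : EuclideanSpace ℝ (Fin n)) (hxe : xe ∈ ball (0 : EuclideanSpace ℝ (Fin n)) (1/2))
    (he : EuclideanSpace ℝ (Fin n)) (hhe : he ∈ sphere (0 : EuclideanSpace ℝ (Fin n)) (ε ^ ((3:ℝ)/4)))
    (hmaxh : u (xe + he) = sSup (u '' sphere xe (ε ^ ((3:ℝ)/4))))
    (ye : EuclideanSpace ℝ (Fin n)) (hye : ‖xe - ye‖ ≤ C * ε)
    (hkey : u (xe + he) - u ye ≥
      sSup ((fun h => u h - u 0) '' closedBall (0 : EuclideanSpace ℝ (Fin n)) (ε ^ ((3:ℝ)/4)))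
        + ‖ye‖^4 + ‖xe - ye‖^2 / (2*ε)) :
    Splus (ball (0 : EuclideanSpace ℝ (Fin n)) 1) u (xe + he) ≥ δ - C^2 * ε ^ ((1:ℝ)/4) := by
  set r := ε ^ ((3:ℝ)/4)
  have hr : 0 < r := by positivity
  have hhe' : ‖he‖ = r := by simpa using hhe
  have : Nontrivial E := ⟨he, 0, by rintro rfl; simp at hhe'; linarith⟩
  have hxe' : ‖xe‖ < 1 / 2 := by simpa using hxe
  have hu : ContinuousOn u (ball 0 1) := hLip.continuousOn.mono ball_subset_closedBall
  have hΩx : closedBall xe r ⊆ ball 0 1 :=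
    closedBall_subset_ball' (by rw [dist_zero_right]; linarith)
  have hslope : δ - C ^ 2 * ε ^ ((1:ℝ)/4) ≤ sphereSlope u xe r := by
    rw [show ε ^ ((1:ℝ)/4) = ε / r by rw [eq_div_iff hr.ne', ← Real.rpow_add hε]; norm_num,
      ← mul_div_assoc]
    exact hsub.sub_le_sphereSlope_of_penalized hLip
      (hδ ▸ hsub.Splus_le_sphereSlope hu (closedBall_subset_ball (by linarith)) hr)
      hε hr hεsmall hxe' hmaxh hye hkey
  refine le_Splus (nhds_basis_closedBall.mem_iff.1 (isOpen_ball.mem_nhds ?_))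
    fun s hs hΩs => hslope.trans <| hsub.sphereSlope_le_of_eq_sSup (hu.mono hΩx) hΩx hr
      (by rwa [add_sub_cancel_left]) hmaxh (hLip.mono (hΩs.trans ball_subset_closedBall)) hΩs hs
  rw [mem_ball_zero_iff]
  linarith [norm_add_le xe he]

/-- Gradient lower bound propagation (step in Lemma 3.4). -/
theorem stmt18 (u : EuclideanSpace ℝ (Fin n) → ℝ) (C : ℝ) (hC : 0 ≤ C)
    (hLip : LipschitzOnWith C.toNNReal u (closedBall (0 : EuclideanSpace ℝ (Fin n)) 1))
    (hsub : InfSubsol0 (ball (0 : EuclideanSpace ℝ (Fin n)) 1) u)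
    (δ : ℝ) (hδpos : 0 < δ)
    (hδ : Splus (ball (0 : EuclideanSpace ℝ (Fin n)) 1) u 0 = δ)
    (ε : ℝ) (hε : 0 < ε) (hεsmall : ε ^ ((3:ℝ)/4) < 1/2)
    (xe : EuclideanSpace ℝ (Fin n)) (hxe : xe ∈ ball (0 : EuclideanSpace ℝ (Fin n)) (1/2))
    (he : EuclideanSpace ℝ (Fin n)) (hhe : he ∈ sphere (0 : EuclideanSpace ℝ (Fin n)) (ε ^ ((3:ℝ)/4)))
    (hmaxh : u (xe + he) = sSup (u '' sphere xe (ε ^ ((3:ℝ)/4))))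
    (ye : EuclideanSpace ℝ (Fin n)) (hye : ‖xe - ye‖ ≤ C * ε)
    (hkey : u (xe + he) - u ye ≥
      sSup ((fun h => u h - u 0) '' closedBall (0 : EuclideanSpace ℝ (Fin n)) (ε ^ ((3:ℝ)/4)))
        + ‖ye‖^4 + ‖xe - ye‖^2 / (2*ε)) :
    Splus (ball (0 : EuclideanSpace ℝ (Fin n)) 1) u (xe + he) ≥ δ - C^2 * ε ^ ((1:ℝ)/4) :=
  stmt18_general u C hLip hsub δ hδ ε hε hεsmall xe hxe he hhe hmaxh ye hye hkey
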